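/- Let μ and ν be finite nonnegative Radon measures on X whose supports are contained in 𝕋^d × B_{P_T}(0) × [θ_m^0, θ_M^0], where P_T > 0 and 0 < θ_m^0 ≤ θ_M^0, and with μ(X), ν(X) ≤ m_0. Define a(x,μ) = ∫_X φ(x_*−x)(v_*/θ_*) dμ(z_*), ρ_φ(x,μ) = ∫_X φ(x_*−x) dμ(z_*), b(x,μ) = ∫_X ζ(x_*−x)(1/θ_*) dμ(z_*), and ρ_ζ(x,μ) = ∫_X ζ(x_*−x) dμ(z_*). Then there exists a constant C > 0, depending only on P_T, θ_m^0, m_0, ‖φ‖_{L^∞}, ‖φ‖_{Lip}, ‖ζ‖_{L^∞}, ‖ζ‖_{Lip}, such that for all x_1, x_2 ∈ 𝕋^d: |a(x_1,μ) − a(x_2,ν)| ≤ C(|x_1 − x_2| + d(μ,ν)), |b(x_1,μ) − b(x_2,ν)| ≤ C(|x_1 − x_2| + d(μ,ν)), |ρ_φ(x_1,μ) − ρ_φ(x_2,ν)| ≤ C(|x_1 − x_2| + d(μ,ν)), and |ρ_ζ(x_1,μ) − ρ_ζ(x_2,ν)| ≤ C(|x_1 − x_2| + d(μ,ν)). -/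

import Mathlib

/-!
Each functional has the form `∫ k(x_* - x) u(z_*) dμ(z_*)` with `k ∈ {φ, ζ}` bounded and
Lipschitz, and a weight `u` which on `𝕋^d × B_P(0) × [θm, θM]` coincides with a function that is
bounded and Lipschitz on all of `X`: `1`, `1/max(θm, θ)`, or, after pairing `a` with a vector
`e` of norm at most one, `⟨e, v⟩` clipped to `[-P, P]` and divided by `max(θm, θ)`. Moving the
base point then costs `Lip(k) · sup|u| · μ(X) · |x₁ - x₂|`, and changing the measure costs
`(sup|k u| + Lip(k u)) · d(μ, ν)`, since the integrand divided by that constant is a test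
function of the bounded Lipschitz distance.
-/

open MeasureTheory Set
open scoped Topology NNReal

noncomputable section

instance factZeroLtOne' : Fact ((0:ℝ) < 1) := ⟨zero_lt_one⟩

/-- The `d`-dimensional torus `𝕋^d = ℝ^d / ℤ^d`. -/
abbrev Td (d : ℕ) := Fin d → AddCircle (1 : ℝ)

/-- The velocity space `ℝ^d` with the Euclidean norm. -/
abbrev Vd (d : ℕ) := EuclideanSpace ℝ (Fin d)

/-- The phase space `X = 𝕋^d × ℝ^d × ℝ` (the temperature variable `θ` is modelled as a real
number; positivity of `θ` is imposed through support conditions). -/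
abbrev Xd (d : ℕ) := Td d × Vd d × ℝ

/-- The canonical projection `ℝ^d → 𝕋^d`. -/
def projT (d : ℕ) (y : Vd d) : Td d := fun i => (y i : AddCircle (1 : ℝ))

variable {d : ℕ}

/-- The alignment force `F[μ](x,v,θ) = ∫ φ(x_* - x) (v_*/θ_* - v/θ) dμ(z_*)`. -/
def Fker (φ : Td d → ℝ) (μ : Measure (Xd d)) (x : Td d) (v : Vd d) (θ : ℝ) : Vd d :=
  ∫ z, φ (z.1 - x) • ((z.2.2)⁻¹ • z.2.1 - θ⁻¹ • v) ∂μ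

/-- The temperature interaction `G[μ](x,θ) = ∫ ζ(x_* - x) (1/θ - 1/θ_*) dμ(z_*)`. -/
def Gker (ζ : Td d → ℝ) (μ : Measure (Xd d)) (x : Td d) (θ : ℝ) : ℝ :=
  ∫ z, ζ (z.1 - x) * (θ⁻¹ - (z.2.2)⁻¹) ∂μ

/-- The bounded Lipschitz distance between two measures on `X`. -/
def blDist (μ ν : Measure (Xd d)) : ℝ :=
  sSup {r | ∃ g : Xd d → ℝ, (∀ z, |g z| ≤ 1) ∧ LipschitzWith 1 g ∧
    r = |(∫ z, g z ∂μ) - ∫ z, g z ∂ν|}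

/-- `supp μ ⊆ 𝕋^d × B_P(0) × [θm, θM]`. -/
def SuppIn (μ : Measure (Xd d)) (P θm θM : ℝ) : Prop :=
  μ {z : Xd d | ¬(‖z.2.1‖ ≤ P ∧ z.2.2 ∈ Icc θm θM)} = 0

/-- `(μ t)_{t ∈ [0,T]}` is a measure-valued solution of the kinetic thermomechanical
Cucker–Smale equation: each `μ t` is a finite measure, `t ↦ ∫ g dμ_t` is continuous for
`g ∈ C_0(X)`, and the weak formulation holds for all test functions `g ∈ C_0^1([0,T) × X)`
(C¹-regularity on the torus is expressed through the lift along `projT`, and the transport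
term `∂_s g + v·∇_x g + F[μ_s]·∇_v g + G[μ_s] ∂_θ g` is expressed as the derivative of `g`
along the characteristic direction, which agrees with it by the chain rule). -/
def IsMVSol (φ ζ : Td d → ℝ) (T : ℝ) (μ : ℝ → Measure (Xd d)) : Prop :=
  (∀ t ∈ Icc (0:ℝ) T, IsFiniteMeasure (μ t)) ∧
  (∀ g : Xd d → ℝ, Continuous g → HasCompactSupport g →
     (∀ z : Xd d, z.2.2 ≤ 0 → g z = 0) →
     ContinuousOn (fun t => ∫ z, g z ∂(μ t)) (Icc 0 T)) ∧
  (∀ g : ℝ → Xd d → ℝ,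
     ContDiff ℝ 1 (fun p : ℝ × Vd d × Vd d × ℝ =>
        g p.1 (projT d p.2.1, p.2.2.1, p.2.2.2)) →
     HasCompactSupport (Function.uncurry g) →
     (∀ s, T ≤ s → ∀ z, g s z = 0) →
     (∀ s, ∀ z : Xd d, z.2.2 ≤ 0 → g s z = 0) →
     ∀ t ∈ Icc (0:ℝ) T,
       (∫ z, g t z ∂(μ t)) - ∫ z, g 0 z ∂(μ 0) =
       ∫ s in (0:ℝ)..t, ∫ z, deriv (fun a : ℝ =>
           g (s + a) (z.1 + projT d (a • z.2.1),
             z.2.1 + a • Fker φ (μ s) z.1 z.2.1 z.2.2,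
             z.2.2 + a • Gker ζ (μ s) z.1 z.2.2)) 0 ∂(μ s))

/-- `a(x,μ) = ∫ φ(x_* - x) (v_*/θ_*) dμ(z_*)`. -/
def aker {d : ℕ} (φ : Td d → ℝ) (μ : Measure (Xd d)) (x : Td d) : Vd d :=
  ∫ z, φ (z.1 - x) • ((z.2.2)⁻¹ • z.2.1) ∂μ

/-- `b(x,μ) = ∫ ζ(x_* - x) (1/θ_*) dμ(z_*)`. -/
def bker {d : ℕ} (ζ : Td d → ℝ) (μ : Measure (Xd d)) (x : Td d) : ℝ :=
  ∫ z, ζ (z.1 - x) * (z.2.2)⁻¹ ∂μ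

/-- `ρ_φ(x,μ) = ∫ φ(x_* - x) dμ(z_*)`. -/
def rker {d : ℕ} (φ : Td d → ℝ) (μ : Measure (Xd d)) (x : Td d) : ℝ :=
  ∫ z, φ (z.1 - x) ∂μ

lemma LipschitzWith.mul_of_abs_le {α : Type*} [PseudoMetricSpace α] {f g : α → ℝ}
    {Kf Kg Mf Mg : ℝ≥0} (hf : LipschitzWith Kf f) (hg : LipschitzWith Kg g)
    (hfM : ∀ a, |f a| ≤ Mf) (hgM : ∀ a, |g a| ≤ Mg) :
    LipschitzWith (Mf * Kg + Mg * Kf) fun a => f a * g a := by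
  refine LipschitzWith.of_dist_le_mul fun a b => ?_
  have hfab := hf.dist_le_mul a b
  have hgab := hg.dist_le_mul a b
  rw [Real.dist_eq] at hfab hgab ⊢
  push_cast
  calc |f a * g a - f b * g b| = |f a * (g a - g b) + g b * (f a - f b)| := by ring_nf
    _ ≤ |f a| * |g a - g b| + |g b| * |f a - f b| := by
      rw [← abs_mul, ← abs_mul]; exact abs_add_le (f a * (g a - g b)) (g b * (f a - f b))
    _ ≤ Mf * (Kg * dist a b) + Mg * (Kf * dist a b) := by
      gcongr
      exacts [hfM a, hgM b]
    _ = (Mf * Kg + Mg * Kf) * dist a b := by ring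

lemma lipschitzWith_inv_max {m : ℝ≥0} (hm : 0 < m) :
    LipschitzWith (m⁻¹ ^ 2) fun t : ℝ => (max (m : ℝ) t)⁻¹ := by
  refine LipschitzWith.of_dist_le_mul fun s t => ?_
  have hm' : (0 : ℝ) < m := hm
  have hs : (m : ℝ) ≤ max (m : ℝ) s := le_max_left _ _
  have ht : (m : ℝ) ≤ max (m : ℝ) t := le_max_left _ _
  have hst : |max (m : ℝ) t - max (m : ℝ) s| ≤ |s - t| := by
    simpa [Real.dist_eq, abs_sub_comm s t] using
      (LipschitzWith.id.const_max (m : ℝ)).dist_le_mul t s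
  rw [Real.dist_eq, Real.dist_eq, inv_sub_inv (by positivity) (by positivity), abs_div,
    abs_of_pos (by positivity : (0 : ℝ) < max (m : ℝ) s * max (m : ℝ) t),
    div_le_iff₀ (by positivity)]
  push_cast
  calc |max (m : ℝ) t - max (m : ℝ) s| ≤ |s - t| := hst
    _ = (m : ℝ)⁻¹ ^ 2 * |s - t| * (m * m) := by field_simp
    _ ≤ (m : ℝ)⁻¹ ^ 2 * |s - t| * (max (m : ℝ) s * max (m : ℝ) t) := by gcongr

lemma abs_inv_max_le {m : ℝ≥0} (hm : 0 < m) (t : ℝ) : |(max (m : ℝ) t)⁻¹| ≤ (m⁻¹ : ℝ≥0) := by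
  have hm' : (0 : ℝ) < m := hm
  rw [abs_of_pos (by positivity), NNReal.coe_inv]
  exact inv_anti₀ hm' (le_max_left _ _)

lemma norm_le_of_forall_inner_le {E : Type*} [NormedAddCommGroup E] [InnerProductSpace ℝ E]
    {w : E} {M : ℝ} (h : ∀ e : E, ‖e‖ ≤ 1 → inner ℝ e w ≤ M) : ‖w‖ ≤ M := by
  rcases eq_or_ne w 0 with rfl | hw
  · simpa using h 0 (by simp)
  · have hw' : ‖w‖ ≠ 0 := norm_ne_zero_iff.mpr hw
    convert h (‖w‖⁻¹ • w) (by rw [norm_smul, norm_inv, norm_norm, inv_mul_cancel₀ hw'])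
    rw [real_inner_smul_left, real_inner_self_eq_norm_mul_norm, ← mul_assoc,
      inv_mul_cancel₀ hw', one_mul]

lemma bddAbove_blDist_set (μ ν : Measure (Xd d)) [IsFiniteMeasure μ] [IsFiniteMeasure ν] :
    BddAbove {r | ∃ g : Xd d → ℝ, (∀ z, |g z| ≤ 1) ∧ LipschitzWith 1 g ∧
      r = |(∫ z, g z ∂μ) - ∫ z, g z ∂ν|} := by
  refine ⟨(μ univ).toReal + (ν univ).toReal, ?_⟩
  rintro r ⟨g, hg, -, rfl⟩
  have hg' (ρ : Measure (Xd d)) : ∀ᵐ z ∂ρ, ‖g z‖ ≤ 1 := Filter.Eventually.of_forall hg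
  calc |(∫ z, g z ∂μ) - ∫ z, g z ∂ν| ≤ ‖∫ z, g z ∂μ‖ + ‖∫ z, g z ∂ν‖ := abs_sub _ _
    _ ≤ 1 * (μ univ).toReal + 1 * (ν univ).toReal :=
      add_le_add (norm_integral_le_of_norm_le_const (hg' μ))
        (norm_integral_le_of_norm_le_const (hg' ν))
    _ = (μ univ).toReal + (ν univ).toReal := by ring

lemma blDist_nonneg (μ ν : Measure (Xd d)) [IsFiniteMeasure μ] [IsFiniteMeasure ν] :
    0 ≤ blDist μ ν :=
  le_csSup (bddAbove_blDist_set μ ν) ⟨fun _ => 0, by simp, LipschitzWith.const' 0, by simp⟩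

lemma abs_integral_sub_le_mul_blDist (μ ν : Measure (Xd d)) [IsFiniteMeasure μ]
    [IsFiniteMeasure ν] {g : Xd d → ℝ} {K c : ℝ≥0} (hg : ∀ z, |g z| ≤ c)
    (hgK : LipschitzWith K g) (hKc : K ≤ c) :
    |(∫ z, g z ∂μ) - ∫ z, g z ∂ν| ≤ c * blDist μ ν := by
  rcases eq_zero_or_pos c with rfl | hc
  · have : g = 0 := funext fun z => abs_nonpos_iff.mp (by simpa using hg z)
    simp [this]
  have hc' : (0 : ℝ) < c := hc
  have hmem : |(∫ z, (c : ℝ)⁻¹ * g z ∂μ) - ∫ z, (c : ℝ)⁻¹ * g z ∂ν| ≤ blDist μ ν := by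
    refine le_csSup (bddAbove_blDist_set μ ν) ⟨fun z => (c : ℝ)⁻¹ * g z, fun z => ?_, ?_, rfl⟩
    · rw [abs_mul, abs_inv, abs_of_pos hc', inv_mul_le_iff₀ hc', mul_one]
      exact hg z
    · refine ((lipschitzWith_smul (c : ℝ)⁻¹).comp hgK).weaken ?_
      rw [nnnorm_inv, NNReal.nnnorm_eq, ← div_eq_inv_mul]
      exact div_le_one_of_le₀ hKc c.2
  rw [integral_const_mul, integral_const_mul, ← mul_sub, abs_mul, abs_inv, abs_of_pos hc',
    inv_mul_le_iff₀ hc'] at hmem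
  exact hmem

def kernelIntegral (k : Td d → ℝ) (u : Xd d → ℝ) (μ : Measure (Xd d)) (x : Td d) : ℝ :=
  ∫ z, k (z.1 - x) * u z ∂μ

def kernelStabilityConst (Kk Mk Ku Mu m : ℝ≥0) : ℝ≥0 :=
  Kk * Mu * m + (Mk * Mu + (Mk * Ku + Mu * Kk))

section KernelIntegral

variable {k : Td d → ℝ} {u : Xd d → ℝ} {Kk Mk Ku Mu : ℝ≥0}
  (hkK : LipschitzWith Kk k) (hkM : ∀ y, |k y| ≤ Mk)
  (huK : LipschitzWith Ku u) (huM : ∀ z, |u z| ≤ Mu)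
include hkK hkM huK huM

lemma lipschitzWith_kernel_mul (x : Td d) :
    LipschitzWith (Mk * Ku + Mu * Kk) fun z : Xd d => k (z.1 - x) * u z := by
  have hshift : LipschitzWith Kk fun z : Xd d => k (z.1 - x) := by
    simpa [Function.comp_def] using hkK.comp ((IsometryEquiv.subRight x).isometry.lipschitz.comp
      (LipschitzWith.prod_fst (α := Td d) (β := Vd d × ℝ)))
  exact hshift.mul_of_abs_le huK (fun z => hkM _) huM

lemma integrable_kernel_mul (μ : Measure (Xd d)) [IsFiniteMeasure μ] (x : Td d) :
    Integrable (fun z : Xd d => k (z.1 - x) * u z) μ := by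
  refine Integrable.of_bound
    (lipschitzWith_kernel_mul hkK hkM huK huM x).continuous.aestronglyMeasurable (Mk * Mu)
    (Filter.Eventually.of_forall fun z => ?_)
  rw [Real.norm_eq_abs, abs_mul]
  exact mul_le_mul (hkM _) (huM z) (abs_nonneg _) Mk.2

lemma abs_kernelIntegral_sub_le_of_base (μ : Measure (Xd d)) [IsFiniteMeasure μ]
    (x₁ x₂ : Td d) :
    |kernelIntegral k u μ x₁ - kernelIntegral k u μ x₂| ≤
      Kk * Mu * (μ univ).toReal * dist x₁ x₂ := by
  rw [kernelIntegral, kernelIntegral, ← integral_sub (integrable_kernel_mul hkK hkM huK huM μ x₁)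
    (integrable_kernel_mul hkK hkM huK huM μ x₂)]
  have hpt (z : Xd d) : ‖k (z.1 - x₁) * u z - k (z.1 - x₂) * u z‖ ≤ Kk * dist x₁ x₂ * Mu := by
    rw [Real.norm_eq_abs, ← sub_mul, abs_mul]
    refine mul_le_mul ?_ (huM z) (abs_nonneg _) (by positivity)
    have h := hkK.dist_le_mul (z.1 - x₁) (z.1 - x₂)
    rwa [Real.dist_eq, dist_sub_left] at h
  calc _ ≤ Kk * dist x₁ x₂ * Mu * (μ univ).toReal :=
        norm_integral_le_of_norm_le_const (Filter.Eventually.of_forall hpt)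
    _ = Kk * Mu * (μ univ).toReal * dist x₁ x₂ := by ring

lemma abs_kernelIntegral_sub_le_of_measure (μ ν : Measure (Xd d)) [IsFiniteMeasure μ]
    [IsFiniteMeasure ν] (x : Td d) :
    |kernelIntegral k u μ x - kernelIntegral k u ν x| ≤
      (Mk * Mu + (Mk * Ku + Mu * Kk) : ℝ≥0) * blDist μ ν := by
  refine abs_integral_sub_le_mul_blDist μ ν (fun z => ?_)
    (lipschitzWith_kernel_mul hkK hkM huK huM x) le_add_self
  rw [abs_mul, NNReal.coe_add]
  exact (mul_le_mul (hkM _) (huM z) (abs_nonneg _) Mk.2).trans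
    (le_add_of_nonneg_right (by positivity))

theorem abs_kernelIntegral_sub_le {μ ν : Measure (Xd d)} [IsFiniteMeasure μ] [IsFiniteMeasure ν]
    {m : ℝ≥0} (hμ : μ univ ≤ m) (x₁ x₂ : Td d) :
    |kernelIntegral k u μ x₁ - kernelIntegral k u ν x₂| ≤
      kernelStabilityConst Kk Mk Ku Mu m * (dist x₁ x₂ + blDist μ ν) := by
  have hbase := abs_kernelIntegral_sub_le_of_base hkK hkM huK huM μ x₁ x₂
  have hmeas := abs_kernelIntegral_sub_le_of_measure hkK hkM huK huM μ ν x₂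
  have hμ' : (μ univ).toReal ≤ m := ENNReal.toReal_le_coe_of_le_coe hμ
  have hbl := blDist_nonneg μ ν
  have hd := dist_nonneg (x := x₁) (y := x₂)
  rw [kernelStabilityConst]
  push_cast at hmeas ⊢
  calc _ ≤ |kernelIntegral k u μ x₁ - kernelIntegral k u μ x₂| +
        |kernelIntegral k u μ x₂ - kernelIntegral k u ν x₂| := abs_sub_le _ _ _
    _ ≤ Kk * Mu * m * dist x₁ x₂ + (Mk * Mu + (Mk * Ku + Mu * Kk)) * blDist μ ν := by
      gcongr
      exact hbase.trans (by gcongr)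
    _ ≤ _ := by
      have hA : (0 : ℝ) ≤ Kk * Mu * m := by positivity
      have hB : (0 : ℝ) ≤ Mk * Mu + (Mk * Ku + Mu * Kk) := by positivity
      linarith [mul_nonneg hA hbl, mul_nonneg hB hd]

end KernelIntegral

def clampAbs (P : ℝ≥0) (s : ℝ) : ℝ := max (-(P : ℝ)) (min (P : ℝ) s)

lemma clampAbs_of_abs_le {P : ℝ≥0} {s : ℝ} (hs : |s| ≤ P) : clampAbs P s = s := by
  rw [clampAbs, min_eq_right (abs_le.mp hs).2, max_eq_right (abs_le.mp hs).1]

lemma abs_clampAbs_le (P : ℝ≥0) (s : ℝ) : |clampAbs P s| ≤ P :=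
  abs_le.mpr ⟨le_max_left _ _, max_le (neg_le_self P.2) (min_le_left _ _)⟩

lemma lipschitzWith_clampAbs (P : ℝ≥0) : LipschitzWith 1 (clampAbs P) :=
  (LipschitzWith.id.const_min _).const_max _

lemma lipschitzWith_temp : LipschitzWith 1 fun z : Xd d => z.2.2 := by
  simpa [Function.comp_def] using
    LipschitzWith.prod_snd.comp (LipschitzWith.prod_snd (α := Td d) (β := Vd d × ℝ))

lemma lipschitzWith_inner_vel {e : Vd d} (he : ‖e‖ ≤ 1) :
    LipschitzWith 1 fun z : Xd d => inner ℝ e z.2.1 := by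
  have hvel : LipschitzWith 1 fun z : Xd d => z.2.1 := by
    simpa [Function.comp_def] using
      LipschitzWith.prod_fst.comp (LipschitzWith.prod_snd (α := Td d) (β := Vd d × ℝ))
  refine ((innerSL ℝ e).lipschitz.comp hvel).weaken ?_
  rw [mul_one, ← NNReal.coe_le_coe, coe_nnnorm, innerSL_apply_norm]
  exact he

def invTempWeight (θm : ℝ≥0) (z : Xd d) : ℝ := (max (θm : ℝ) z.2.2)⁻¹

def alignWeight (θm P : ℝ≥0) (e : Vd d) (z : Xd d) : ℝ :=
  invTempWeight θm z * clampAbs P (inner ℝ e z.2.1)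

lemma abs_invTempWeight_le {θm : ℝ≥0} (hθm : 0 < θm) (z : Xd d) :
    |invTempWeight θm z| ≤ (θm⁻¹ : ℝ≥0) :=
  abs_inv_max_le hθm _

lemma lipschitzWith_invTempWeight {θm : ℝ≥0} (hθm : 0 < θm) :
    LipschitzWith (θm⁻¹ ^ 2) (invTempWeight (d := d) θm) := by
  have h := (lipschitzWith_inv_max hθm).comp (lipschitzWith_temp (d := d))
  rwa [mul_one] at h

lemma abs_alignWeight_le {θm : ℝ≥0} (hθm : 0 < θm) (P : ℝ≥0) (e : Vd d) (z : Xd d) :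
    |alignWeight θm P e z| ≤ (θm⁻¹ * P : ℝ≥0) := by
  rw [alignWeight, abs_mul, NNReal.coe_mul]
  exact mul_le_mul (abs_invTempWeight_le hθm z) (abs_clampAbs_le P _) (abs_nonneg _)
    (by positivity)

lemma lipschitzWith_alignWeight {θm : ℝ≥0} (hθm : 0 < θm) (P : ℝ≥0) {e : Vd d}
    (he : ‖e‖ ≤ 1) :
    LipschitzWith (θm⁻¹ + P * θm⁻¹ ^ 2) (alignWeight θm P e) := by
  have h := (lipschitzWith_invTempWeight hθm).mul_of_abs_le
    ((lipschitzWith_clampAbs P).comp (lipschitzWith_inner_vel he)) (abs_invTempWeight_le hθm)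
    fun z => abs_clampAbs_le P _
  rwa [mul_one, mul_one] at h

lemma SuppIn.ae {μ : Measure (Xd d)} {P θm θM : ℝ} (hs : SuppIn μ P θm θM) :
    ∀ᵐ z ∂μ, ‖z.2.1‖ ≤ P ∧ z.2.2 ∈ Icc θm θM :=
  ae_iff.mpr hs

lemma rker_eq_kernelIntegral (k : Td d → ℝ) (μ : Measure (Xd d)) (x : Td d) :
    rker k μ x = kernelIntegral k 1 μ x := by
  simp [rker, kernelIntegral]

lemma bker_eq_kernelIntegral {μ : Measure (Xd d)} {P θM : ℝ} {θm : ℝ≥0}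
    (hs : SuppIn μ P θm θM) (ζ : Td d → ℝ) (x : Td d) :
    bker ζ μ x = kernelIntegral ζ (invTempWeight θm) μ x := by
  refine integral_congr_ae ?_
  filter_upwards [hs.ae] with z hz
  rw [invTempWeight, max_eq_right hz.2.1]

lemma inner_aker_eq_kernelIntegral {μ : Measure (Xd d)} [IsFiniteMeasure μ] {P θm : ℝ≥0}
    {θM : ℝ} (hθm : 0 < θm) (hs : SuppIn μ P θm θM) {φ : Td d → ℝ} {Mφ : ℝ≥0}
    (hφ : Continuous φ) (hφM : ∀ y, |φ y| ≤ Mφ) {e : Vd d} (he : ‖e‖ ≤ 1) (x : Td d) :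
    inner ℝ e (aker φ μ x) = kernelIntegral φ (alignWeight θm P e) μ x := by
  have hθm' : (0 : ℝ) < θm := hθm
  have hmeas : Measurable fun z : Xd d => φ (z.1 - x) • ((z.2.2)⁻¹ • z.2.1) := by
    have hφx : Continuous fun z : Xd d => φ (z.1 - x) := by fun_prop
    exact hφx.measurable.smul ((measurable_snd.comp measurable_snd).inv.smul
      (measurable_fst.comp measurable_snd))
  have hint : Integrable (fun z : Xd d => φ (z.1 - x) • ((z.2.2)⁻¹ • z.2.1)) μ := by
    refine Integrable.of_bound hmeas.aestronglyMeasurable (Mφ * ((θm : ℝ)⁻¹ * P)) ?_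
    filter_upwards [hs.ae] with z ⟨hv, hθ, _⟩
    have hθ0 : 0 < z.2.2 := hθm'.trans_le hθ
    rw [norm_smul, norm_smul, Real.norm_eq_abs, Real.norm_eq_abs, abs_inv, abs_of_pos hθ0]
    exact mul_le_mul (hφM _) (mul_le_mul (inv_anti₀ hθm' hθ) hv (norm_nonneg _) (by positivity))
      (by positivity) (by positivity)
  rw [aker, ← integral_inner hint]
  refine integral_congr_ae ?_
  filter_upwards [hs.ae] with z ⟨hv, hθ, _⟩
  have hev : |inner ℝ e z.2.1| ≤ P :=
    (abs_real_inner_le_norm e z.2.1).trans (by nlinarith [norm_nonneg e, norm_nonneg z.2.1])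
  simp only [alignWeight, invTempWeight, real_inner_smul_right, max_eq_right hθ,
    clampAbs_of_abs_le hev]

section Functionals

variable {k : Td d → ℝ} {K M m : ℝ≥0} (hkK : LipschitzWith K k) (hkM : ∀ y, |k y| ≤ M)
  {μ ν : Measure (Xd d)} [IsFiniteMeasure μ] [IsFiniteMeasure ν] (hμ : μ univ ≤ m)
include hkK hkM hμ

theorem abs_rker_sub_le (x₁ x₂ : Td d) :
    |rker k μ x₁ - rker k ν x₂| ≤ kernelStabilityConst K M 0 1 m * (dist x₁ x₂ + blDist μ ν) := by
  rw [rker_eq_kernelIntegral, rker_eq_kernelIntegral]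
  exact abs_kernelIntegral_sub_le hkK hkM (LipschitzWith.const' 1) (fun _ => by simp) hμ x₁ x₂

theorem abs_bker_sub_le {P θM : ℝ} {θm : ℝ≥0} (hθm : 0 < θm) (hsμ : SuppIn μ P θm θM)
    (hsν : SuppIn ν P θm θM) (x₁ x₂ : Td d) :
    |bker k μ x₁ - bker k ν x₂| ≤
      kernelStabilityConst K M (θm⁻¹ ^ 2) θm⁻¹ m * (dist x₁ x₂ + blDist μ ν) := by
  rw [bker_eq_kernelIntegral hsμ, bker_eq_kernelIntegral hsν]
  exact abs_kernelIntegral_sub_le hkK hkM (lipschitzWith_invTempWeight hθm)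
    (abs_invTempWeight_le hθm) hμ x₁ x₂

theorem norm_aker_sub_le {P θm : ℝ≥0} {θM : ℝ} (hθm : 0 < θm) (hsμ : SuppIn μ P θm θM)
    (hsν : SuppIn ν P θm θM) (x₁ x₂ : Td d) :
    ‖aker k μ x₁ - aker k ν x₂‖ ≤
      kernelStabilityConst K M (θm⁻¹ + P * θm⁻¹ ^ 2) (θm⁻¹ * P) m *
        (dist x₁ x₂ + blDist μ ν) := by
  refine norm_le_of_forall_inner_le fun e he => ?_
  rw [inner_sub_right, inner_aker_eq_kernelIntegral hθm hsμ hkK.continuous hkM he,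
    inner_aker_eq_kernelIntegral hθm hsν hkK.continuous hkM he]
  exact (le_abs_self _).trans (abs_kernelIntegral_sub_le hkK hkM
    (lipschitzWith_alignWeight hθm P he) (abs_alignWeight_le hθm P e) hμ x₁ x₂)

end Functionals

theorem functionals_joint_stability_general
    (d : ℕ) (φ ζ : Td d → ℝ)
    (Mφ Lφ Mζ Lζ : ℝ) (hMφ : ∀ x, |φ x| ≤ Mφ) (hMζ : ∀ x, |ζ x| ≤ Mζ)
    (hLφ : LipschitzWith (Real.toNNReal Lφ) φ)
    (hLζ : LipschitzWith (Real.toNNReal Lζ) ζ)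
    (P θm θM m0 : ℝ) (hP : 0 < P) (hθm : 0 < θm)
    (μ ν : Measure (Xd d)) [IsFiniteMeasure μ] [IsFiniteMeasure ν]
    (hsμ : SuppIn μ P θm θM) (hsν : SuppIn ν P θm θM)
    (hmμ : μ Set.univ ≤ ENNReal.ofReal m0) :
    ∃ C : ℝ, 0 < C ∧ ∀ x₁ x₂ : Td d,
      ‖aker φ μ x₁ - aker φ ν x₂‖ ≤ C * (dist x₁ x₂ + blDist μ ν) ∧
      |bker ζ μ x₁ - bker ζ ν x₂| ≤ C * (dist x₁ x₂ + blDist μ ν) ∧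
      |rker φ μ x₁ - rker φ ν x₂| ≤ C * (dist x₁ x₂ + blDist μ ν) ∧
      |rker ζ μ x₁ - rker ζ ν x₂| ≤ C * (dist x₁ x₂ + blDist μ ν) := by
  set θ₀ : ℝ≥0 := ⟨θm, hθm.le⟩
  set P₀ : ℝ≥0 := ⟨P, hP.le⟩
  have hθ₀ : 0 < θ₀ := hθm
  have hφM (y : Td d) : |φ y| ≤ Mφ.toNNReal := (hMφ y).trans (Real.le_coe_toNNReal Mφ)
  have hζM (y : Td d) : |ζ y| ≤ Mζ.toNNReal := (hMζ y).trans (Real.le_coe_toNNReal Mζ)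
  set Ca := kernelStabilityConst Lφ.toNNReal Mφ.toNNReal (θ₀⁻¹ + P₀ * θ₀⁻¹ ^ 2) (θ₀⁻¹ * P₀)
    m0.toNNReal
  set Cb := kernelStabilityConst Lζ.toNNReal Mζ.toNNReal (θ₀⁻¹ ^ 2) θ₀⁻¹ m0.toNNReal
  set Cφ := kernelStabilityConst Lφ.toNNReal Mφ.toNNReal 0 1 m0.toNNReal
  set Cζ := kernelStabilityConst Lζ.toNNReal Mζ.toNNReal 0 1 m0.toNNReal
  refine ⟨1 + (Ca + Cb + Cφ + Cζ : ℝ≥0), by positivity, fun x₁ x₂ => ?_⟩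
  have hD : 0 ≤ dist x₁ x₂ + blDist μ ν := add_nonneg dist_nonneg (blDist_nonneg μ ν)
  have hmono {c : ℝ≥0} {A : ℝ} (hc : c ≤ Ca + Cb + Cφ + Cζ)
      (hA : A ≤ c * (dist x₁ x₂ + blDist μ ν)) :
      A ≤ (1 + (Ca + Cb + Cφ + Cζ : ℝ≥0)) * (dist x₁ x₂ + blDist μ ν) :=
    hA.trans (mul_le_mul_of_nonneg_right (by linarith [NNReal.coe_le_coe.2 hc]) hD)
  exact ⟨hmono (le_add_right (le_add_right le_self_add))
      (norm_aker_sub_le (P := P₀) (θm := θ₀) hLφ hφM hmμ hθ₀ hsμ hsν x₁ x₂),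
    hmono (le_add_right (le_add_right le_add_self))
      (abs_bker_sub_le (θm := θ₀) hLζ hζM hmμ hθ₀ hsμ hsν x₁ x₂),
    hmono (le_add_right le_add_self) (abs_rker_sub_le hLφ hφM hmμ x₁ x₂),
    hmono le_add_self (abs_rker_sub_le hLζ hζM hmμ x₁ x₂)⟩

/-- joint stability of the functionals `a`, `b`, `ρ_φ`, `ρ_ζ` in the base
point and in the input measure: there is a constant `C > 0` (depending only on the data)
such that each of them varies by at most `C(|x₁ - x₂| + d(μ,ν))`. -/
theorem functionals_joint_stability
    (d : ℕ) (φ ζ : Td d → ℝ)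
    (hφ0 : ∀ x, 0 ≤ φ x) (hζ0 : ∀ x, 0 ≤ ζ x)
    (Mφ Lφ Mζ Lζ : ℝ) (hMφ : ∀ x, |φ x| ≤ Mφ) (hMζ : ∀ x, |ζ x| ≤ Mζ)
    (hLφnn : 0 ≤ Lφ) (hLζnn : 0 ≤ Lζ)
    (hLφ : LipschitzWith (Real.toNNReal Lφ) φ)
    (hLζ : LipschitzWith (Real.toNNReal Lζ) ζ)
    (P θm θM m0 : ℝ) (hP : 0 < P) (hθm : 0 < θm) (hθmM : θm ≤ θM) (hm0 : 0 ≤ m0)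
    (μ ν : Measure (Xd d)) [IsFiniteMeasure μ] [IsFiniteMeasure ν]
    (hsμ : SuppIn μ P θm θM) (hsν : SuppIn ν P θm θM)
    (hmμ : μ Set.univ ≤ ENNReal.ofReal m0) (hmν : ν Set.univ ≤ ENNReal.ofReal m0) :
    ∃ C : ℝ, 0 < C ∧ ∀ x₁ x₂ : Td d,
      ‖aker φ μ x₁ - aker φ ν x₂‖ ≤ C * (dist x₁ x₂ + blDist μ ν) ∧
      |bker ζ μ x₁ - bker ζ ν x₂| ≤ C * (dist x₁ x₂ + blDist μ ν) ∧
      |rker φ μ x₁ - rker φ ν x₂| ≤ C * (dist x₁ x₂ + blDist μ ν) ∧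
      |rker ζ μ x₁ - rker ζ ν x₂| ≤ C * (dist x₁ x₂ + blDist μ ν) :=
  functionals_joint_stability_general d φ ζ Mφ Lφ Mζ Lζ hMφ hMζ hLφ hLζ P θm θM m0 hP hθm μ ν hsμ
    hsν hmμ
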